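/- For every non-negative integer m and positive integer n, ∫₀^{π/2} x^{2m} cos^{2n}(x) dx = (2m)! · C(2n,n)/4^n · Σ_{j=0}^{m} (-1)^j ζ_n^⋆({2}_j)/(2^{2j}(2m-2j+1)!) · (π/2)^{2m-2j+1}, where ζ_n^⋆({2}_j) = Σ_{n ≥ k_1 ≥ … ≥ k_j ≥ 1} Π_{i=1}^{j} 1/k_i² (with ζ_n^⋆(∅) = 1). -/

import Mathlib

open Real Finset

/-- Multiple harmonic star sum `ζ_n^⋆({2}_j)`. -/
noncomputable def zstar : ℕ → ℕ → ℝ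
  | _, 0 => 1
  | n, j+1 => ∑ k ∈ Finset.Icc 1 n, zstar k j / ((k:ℝ))^2

/-!
Write `I(p, q) = ∫₀^{π/2} x^p cos^q x dx`. Differentiating the explicit antiderivative
`(q+2) x^{p+2} cos^{q+1} x sin x + (p+2) x^{p+1} cos^{q+2} x` gives
`(q+2)² I(p+2, q+2) = (q+2)(q+1) I(p+2, q) - (p+2)(p+1) I(p, q+2)`.
Normalised as `A(m, n) = I(2m, 2n) / ((2m)! C(2n,n) / 4ⁿ)`, this becomes
`A(m+1, n+1) = A(m+1, n) - A(m, n+1) / (4(n+1)²)`, and the right-hand sum satisfies the same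
recurrence because `ζ_{n+1}^⋆({2}_{j+1}) = ζ_n^⋆({2}_{j+1}) + ζ_{n+1}^⋆({2}_j) / (n+1)²`.
Both sides equal `(π/2)^{2m+1} / (2m+1)!` at `n = 0` and `π/2` at `m = 0` (Wallis), hence
everywhere.
-/

lemma zstar_zero_succ (j : ℕ) : zstar 0 (j + 1) = 0 := by
  simp [zstar]

lemma zstar_succ_succ (n j : ℕ) :
    zstar (n + 1) (j + 1) = zstar n (j + 1) + zstar (n + 1) j / ((n : ℝ) + 1) ^ 2 := by
  rw [zstar, sum_Icc_succ_top (by omega), zstar]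
  push_cast
  rfl

noncomputable def zstarSum (m n : ℕ) : ℝ :=
  ∑ j ∈ range (m + 1),
    (-1) ^ j * zstar n j / (2 ^ (2 * j) * ((2 * m - 2 * j + 1).factorial : ℝ)) *
      (π / 2) ^ (2 * m - 2 * j + 1)

lemma zstarSum_zero_left (n : ℕ) : zstarSum 0 n = π / 2 := by
  simp [zstarSum, zstar]

lemma zstarSum_zero_right (m : ℕ) :
    zstarSum m 0 = (π / 2) ^ (2 * m + 1) / ((2 * m + 1).factorial : ℝ) := by
  rw [zstarSum, sum_range_succ', sum_eq_zero fun j _ => by simp [zstar_zero_succ]]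
  simp [zstar, div_eq_inv_mul]

lemma zstarSum_succ_succ (m n : ℕ) :
    zstarSum (m + 1) (n + 1) =
      zstarSum (m + 1) n - zstarSum m (n + 1) / (4 * ((n : ℝ) + 1) ^ 2) := by
  rw [eq_sub_iff_add_eq, zstarSum, zstarSum, zstarSum, sum_range_succ' _ (m + 1),
    sum_range_succ' _ (m + 1), sum_div, add_right_comm, ← sum_add_distrib]
  congr 1
  refine sum_congr rfl fun j _ => ?_
  rw [show 2 * (m + 1) - 2 * (j + 1) + 1 = 2 * m - 2 * j + 1 by omega, zstar_succ_succ]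
  field_simp
  ring

theorem eq_of_eq_boundary_of_recurrence {α : Type*} {f g : ℕ → ℕ → α}
    (step : ℕ → α → α → α)
    (hf : ∀ m n, f (m + 1) (n + 1) = step n (f (m + 1) n) (f m (n + 1)))
    (hg : ∀ m n, g (m + 1) (n + 1) = step n (g (m + 1) n) (g m (n + 1)))
    (h_left : ∀ n, f 0 n = g 0 n) (h_right : ∀ m, f m 0 = g m 0) (m n : ℕ) :
    f m n = g m n := by
  induction n generalizing m with
  | zero => exact h_right m
  | succ n ihn =>
    induction m with
    | zero => exact h_left _
    | succ m ihm => rw [hf, hg, ihn, ihm]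

noncomputable def cosMoment (p q : ℕ) : ℝ := ∫ x in (0 : ℝ)..(π / 2), x ^ p * cos x ^ q

lemma intervalIntegrable_pow_mul_cos_pow (p q : ℕ) (a b : ℝ) :
    IntervalIntegrable (fun x => x ^ p * cos x ^ q) MeasureTheory.volume a b :=
  ((continuous_pow p).mul (continuous_cos.pow q)).intervalIntegrable a b

lemma cosMoment_zero_right (p : ℕ) : cosMoment p 0 = (π / 2) ^ (p + 1) / (p + 1) := by
  simp [cosMoment]

lemma cosMoment_zero_left_add_two (q : ℕ) :
    cosMoment 0 (q + 2) = (q + 1) / (q + 2) * cosMoment 0 q := by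
  simp [cosMoment, integral_cos_pow]

lemma hasDerivAt_cosMoment_antideriv (p q : ℕ) (x : ℝ) :
    HasDerivAt
      (fun y => (q + 2) * (y ^ (p + 2) * cos y ^ (q + 1) * sin y)
        + (p + 2) * (y ^ (p + 1) * cos y ^ (q + 2)))
      ((q + 2) ^ 2 * (x ^ (p + 2) * cos x ^ (q + 2))
        - (q + 2) * (q + 1) * (x ^ (p + 2) * cos x ^ q)
        + (p + 2) * (p + 1) * (x ^ p * cos x ^ (q + 2))) x := by
  have h := ((((hasDerivAt_pow (p + 2) x).mul ((hasDerivAt_cos x).pow (q + 1))).mul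
    (hasDerivAt_sin x)).const_mul ((q : ℝ) + 2)).add
    (((hasDerivAt_pow (p + 1) x).mul ((hasDerivAt_cos x).pow (q + 2))).const_mul ((p : ℝ) + 2))
  refine h.congr_deriv ?_
  simp only [Pi.mul_apply, Pi.pow_apply, add_tsub_cancel_right]
  push_cast
  linear_combination -((q : ℝ) + 2) * (q + 1) * x ^ (p + 2) * cos x ^ q * Real.sin_sq x

lemma cosMoment_add_two_add_two (p q : ℕ) :
    (q + 2) ^ 2 * cosMoment (p + 2) (q + 2) =
      (q + 2) * (q + 1) * cosMoment (p + 2) q - (p + 2) * (p + 1) * cosMoment p (q + 2) := by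
  have hI (p q : ℕ) := intervalIntegrable_pow_mul_cos_pow p q 0 (π / 2)
  have h := intervalIntegral.integral_eq_sub_of_hasDerivAt
    (fun x _ => hasDerivAt_cosMoment_antideriv p q x)
    ((((hI _ _).const_mul _).sub ((hI _ _).const_mul _)).add ((hI _ _).const_mul _))
  have h_boundary : ((q : ℝ) + 2) * ((π / 2) ^ (p + 2) * cos (π / 2) ^ (q + 1) * sin (π / 2))
      + (p + 2) * ((π / 2) ^ (p + 1) * cos (π / 2) ^ (q + 2))
      - ((q + 2) * (0 ^ (p + 2) * cos 0 ^ (q + 1) * sin 0)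
        + (p + 2) * (0 ^ (p + 1) * cos 0 ^ (q + 2))) = 0 := by
    simp
  rw [h_boundary, intervalIntegral.integral_add (((hI _ _).const_mul _).sub ((hI _ _).const_mul _))
    ((hI _ _).const_mul _), intervalIntegral.integral_sub ((hI _ _).const_mul _)
    ((hI _ _).const_mul _), intervalIntegral.integral_const_mul,
    intervalIntegral.integral_const_mul, intervalIntegral.integral_const_mul] at h
  unfold cosMoment
  linear_combination h

lemma centralBinom_div_four_pow_succ (n : ℕ) :
    (Nat.centralBinom (n + 1) : ℝ) / 4 ^ (n + 1) =
      (2 * n + 1) / (2 * n + 2) * ((Nat.centralBinom n : ℝ) / 4 ^ n) := by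
  have h : ((n : ℝ) + 1) * Nat.centralBinom (n + 1) = 2 * (2 * n + 1) * Nat.centralBinom n := by
    exact_mod_cast Nat.succ_mul_centralBinom_succ n
  field_simp
  linear_combination 2 * 4 ^ n * h

noncomputable def normalizedCosMoment (m n : ℕ) : ℝ :=
  cosMoment (2 * m) (2 * n) / ((2 * m).factorial * ((Nat.centralBinom n : ℝ) / 4 ^ n))

lemma normalizedCosMoment_zero_right (m : ℕ) :
    normalizedCosMoment m 0 = (π / 2) ^ (2 * m + 1) / ((2 * m + 1).factorial : ℝ) := by
  rw [normalizedCosMoment, cosMoment_zero_right, Nat.centralBinom_zero, Nat.factorial_succ]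
  field_simp
  push_cast
  ring

lemma normalizedCosMoment_zero_left (n : ℕ) : normalizedCosMoment 0 n = π / 2 := by
  induction n with
  | zero => simp [normalizedCosMoment, cosMoment]
  | succ n ih =>
    rw [← ih, normalizedCosMoment, normalizedCosMoment, centralBinom_div_four_pow_succ,
      mul_add_one 2 n, cosMoment_zero_left_add_two]
    field_simp
    push_cast
    ring

lemma normalizedCosMoment_succ_succ (m n : ℕ) :
    normalizedCosMoment (m + 1) (n + 1) =
      normalizedCosMoment (m + 1) n - normalizedCosMoment m (n + 1) / (4 * ((n : ℝ) + 1) ^ 2) := by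
  have h := cosMoment_add_two_add_two (2 * m) (2 * n)
  have hc : (Nat.centralBinom n : ℝ) ≠ 0 := mod_cast Nat.centralBinom_ne_zero n
  rw [normalizedCosMoment, normalizedCosMoment, normalizedCosMoment,
    centralBinom_div_four_pow_succ, mul_add_one 2 m, mul_add_one 2 n, Nat.factorial_succ,
    Nat.factorial_succ]
  field_simp
  push_cast at h ⊢
  linear_combination 2 * ((2 * m).factorial : ℝ) * h

theorem stmt_18_general (m n : ℕ) :
    ∫ x in (0:ℝ)..(π/2), x^(2*m) * (Real.cos x)^(2*n) =
      ((2*m).factorial : ℝ) * ((Nat.choose (2*n) n : ℝ) / 4^n) *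
        ∑ j ∈ Finset.range (m+1),
          (-1)^j * zstar n j / (2^(2*j) * ((2*m-2*j+1).factorial : ℝ)) *
            (π/2)^(2*m-2*j+1) := by
  have h := eq_of_eq_boundary_of_recurrence (fun n a b => a - b / (4 * ((n : ℝ) + 1) ^ 2))
    normalizedCosMoment_succ_succ zstarSum_succ_succ
    (fun n => by rw [normalizedCosMoment_zero_left, zstarSum_zero_left])
    (fun m => by rw [normalizedCosMoment_zero_right, zstarSum_zero_right]) m n
  have hc : (Nat.centralBinom n : ℝ) ≠ 0 := mod_cast Nat.centralBinom_ne_zero n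
  rw [normalizedCosMoment, div_eq_iff (by positivity)] at h
  rw [← Nat.centralBinom_eq_two_mul_choose, ← zstarSum]
  exact h.trans (mul_comm _ _)

theorem stmt_18 (m n : ℕ) (hn : 0 < n) :
    ∫ x in (0:ℝ)..(π/2), x^(2*m) * (Real.cos x)^(2*n) =
      ((2*m).factorial : ℝ) * ((Nat.choose (2*n) n : ℝ) / 4^n) *
        ∑ j ∈ Finset.range (m+1),
          (-1)^j * zstar n j / (2^(2*j) * ((2*m-2*j+1).factorial : ℝ)) *
            (π/2)^(2*m-2*j+1) :=
  stmt_18_general m n
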